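/- Let μ be a finite nonnegative Borel measure on ℝ^n and 0 < α < n. If ∫_{ℝ^n} |μ̂(ξ)| |ξ|^{−α} dξ < +∞, where μ̂(ξ) = ∫ e^{i⟨x,ξ⟩} μ(dx), then the Riesz potential U^α μ(x) = ∫ |x−y|^{α−n} μ(dy) is a continuous function on ℝ^n vanishing at infinity. -/

import Mathlib

open MeasureTheory Filter Set Metric
open scoped ENNReal NNReal Topology

noncomputable section

abbrev Euc (m : ℕ) := EuclideanSpace ℝ (Fin m)

def unitCube (k : ℕ) : Set (Euc k) := {t | ∀ i, t i ∈ Set.Icc (0:ℝ) 1}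

/-- Occupation measure of a function on the unit cube. -/
def occMeasure {k n : ℕ} (X : Euc k → Euc n) : Measure (Euc n) :=
  Measure.map X (volume.restrict (unitCube k))

/-- Riesz energy of order `α` of a measure on `ℝ^n`. -/
def rieszEnergy {n : ℕ} (α : ℝ) (μ : Measure (Euc n)) : ℝ≥0∞ :=
  ∫⁻ x, ∫⁻ y, ENNReal.ofReal (‖x - y‖ ^ (α - (n : ℝ))) ∂μ ∂μ

/-- Riesz potential of order α, as an extended-real valued function. -/
def rieszPot {n : ℕ} (α : ℝ) (μ : Measure (Euc n)) (x : Euc n) : ℝ≥0∞ :=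
  ∫⁻ y, ENNReal.ofReal (‖x - y‖ ^ (α - (n : ℝ))) ∂μ

/-!
For `r > 0`, `r ^ (α - n) = c ∫₀^∞ u^(-(n-α)/2-1) e^(-π r²/u) du`, and `e^(-π |z|²/u)` is `u^(n/2)`
times the Fourier transform of the Gaussian `e^(-π u |ξ|²)`. Averaging over `μ` and integrating in
`u` (Fubini on `(0, ∞) × ℝⁿ`, justified exactly by `∫ |μ̂(ξ)| |ξ|^(-α) dξ < ∞`) exhibits `U^α μ` as
a constant times the real part of the Fourier transform of the integrable function
`ξ ↦ |ξ|^(-α) μ̂(2πξ)`, and the Riemann–Lebesgue lemma finishes. Finiteness of the `u`-integral at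
`x` also shows that `μ` has no atom at `x`, the one point where `‖x - y‖ ^ (α - n)` takes the junk
value `0`.
-/

open Real
open scoped FourierTransform RealInnerProductSpace

lemma integrableOn_rpow_mul_exp_neg_mul_Ioi {a r : ℝ} (ha : 0 < a) (hr : 0 < r) :
    IntegrableOn (fun t : ℝ => t ^ (a - 1) * rexp (-(r * t))) (Ioi 0) := by
  simpa [neg_mul] using
    integrableOn_rpow_mul_exp_neg_mul_rpow (p := 1) (by linarith) one_pos hr

/-- The integrand that `integral_comp_rpow_Ioi` produces for the substitution `t ↦ t⁻¹`. -/
lemma rpow_mul_exp_neg_div_eqOn {a c : ℝ} :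
    EqOn (fun t : ℝ => (|(-1 : ℝ)| * t ^ ((-1 : ℝ) - 1)) •
        ((t ^ (-1 : ℝ)) ^ (a - 1) * rexp (-(c * t ^ (-1 : ℝ)))))
      (fun t : ℝ => t ^ (-a - 1) * rexp (-(c / t))) (Ioi 0) := by
  intro t ht
  simp only [smul_eq_mul, abs_neg, abs_one, one_mul]
  rw [rpow_neg_one, inv_rpow (le_of_lt ht), ← rpow_neg (le_of_lt ht), ← mul_assoc,
    ← rpow_add ht, div_eq_mul_inv c t]
  ring_nf

lemma integrableOn_rpow_mul_exp_neg_div_Ioi {a c : ℝ} (ha : 0 < a) (hc : 0 < c) :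
    IntegrableOn (fun t : ℝ => t ^ (-a - 1) * rexp (-(c / t))) (Ioi 0) :=
  ((integrableOn_Ioi_comp_rpow_iff (fun u : ℝ => u ^ (a - 1) * rexp (-(c * u)))
    (by norm_num : (-1 : ℝ) ≠ 0)).mpr (integrableOn_rpow_mul_exp_neg_mul_Ioi ha hc)).congr_fun
    rpow_mul_exp_neg_div_eqOn measurableSet_Ioi

lemma integral_rpow_mul_exp_neg_div_Ioi {a c : ℝ} (ha : 0 < a) (hc : 0 < c) :
    ∫ t in Ioi (0 : ℝ), t ^ (-a - 1) * rexp (-(c / t)) = c ^ (-a) * Gamma a := by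
  have h := integral_comp_rpow_Ioi (fun u : ℝ => u ^ (a - 1) * rexp (-(c * u)))
    (by norm_num : (-1 : ℝ) ≠ 0)
  rw [integral_rpow_mul_exp_neg_mul_Ioi ha hc] at h
  rw [← setIntegral_congr_fun measurableSet_Ioi rpow_mul_exp_neg_div_eqOn, h, one_div,
    ← rpow_neg_one c, ← rpow_mul hc.le, neg_one_mul]

lemma integral_rpow_mul_exp_neg_pi_mul_sq_Ioi {α r : ℝ} (hα : 0 < α) (hr : 0 < r) :
    ∫ u in Ioi (0 : ℝ), u ^ (α / 2 - 1) * rexp (-(π * u * r ^ 2)) =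
      Gamma (α / 2) * π ^ (-(α / 2)) * r ^ (-α) := by
  simp_rw [show ∀ u : ℝ, π * u * r ^ 2 = π * r ^ 2 * u from fun u => by ring]
  rw [integral_rpow_mul_exp_neg_mul_Ioi (half_pos hα) (by positivity), one_div,
    inv_rpow (by positivity), ← rpow_neg (by positivity), mul_rpow pi_pos.le (by positivity),
    ← rpow_natCast, ← rpow_mul hr.le]
  ring_nf

lemma lintegral_ofReal_rpow_Ioi_eq_top (b : ℝ) :
    ∫⁻ t in Ioi (0 : ℝ), ENNReal.ofReal (t ^ b) = ⊤ := by
  by_contra h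
  refine not_integrableOn_Ioi_rpow b
    ⟨(by fun_prop : Measurable fun t : ℝ => t ^ b).aestronglyMeasurable, ?_⟩
  rw [hasFiniteIntegral_iff_ofReal]
  · exact lt_top_iff_ne_top.mpr h
  · filter_upwards [ae_restrict_mem measurableSet_Ioi] with t ht using rpow_nonneg ht.le b

lemma rpow_neg_eq_integral_exp {s r : ℝ} (hs : 0 < s) (hr : 0 < r) :
    r ^ (-s) = π ^ (s / 2) / Gamma (s / 2) *
      ∫ u in Ioi (0 : ℝ), u ^ (-(s / 2) - 1) * rexp (-(π * r ^ 2 / u)) := by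
  rw [integral_rpow_mul_exp_neg_div_Ioi (by positivity) (by positivity),
    mul_rpow pi_pos.le (by positivity), ← rpow_natCast, ← rpow_mul hr.le]
  have := (Gamma_pos_of_pos (half_pos hs)).ne'
  have := (rpow_pos_of_pos pi_pos (s / 2)).ne'
  rw [rpow_neg pi_pos.le, rpow_neg (by positivity)]
  push_cast
  field_simp
  ring_nf
  rw [← rpow_add hr, add_neg_cancel, rpow_zero]

lemma ofReal_rpow_neg_eq_lintegral_exp {s r : ℝ} (hs : 0 < s) (hr : 0 < r) :
    ENNReal.ofReal (r ^ (-s)) = ENNReal.ofReal (π ^ (s / 2) / Gamma (s / 2)) *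
      ∫⁻ u in Ioi (0 : ℝ), ENNReal.ofReal (u ^ (-(s / 2) - 1) * rexp (-(π * r ^ 2 / u))) := by
  rw [rpow_neg_eq_integral_exp hs hr, ENNReal.ofReal_mul (by positivity),
    ofReal_integral_eq_lintegral_ofReal
      (integrableOn_rpow_mul_exp_neg_div_Ioi (half_pos hs) (by positivity))]
  filter_upwards [ae_restrict_mem measurableSet_Ioi] with u hu
  exact mul_nonneg (rpow_nonneg (le_of_lt hu) _) (exp_nonneg _)

section FourierSide

variable {V : Type*} [NormedAddCommGroup V] [InnerProductSpace ℝ V] [MeasurableSpace V]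

/-- `charFun μ (2π ξ)` is `μ̂` in the normalisation `e^(-2πi⟨x, ξ⟩)` of `𝓕`. -/
def rieszSymbol (α : ℝ) (μ : Measure V) (ξ : V) : ℂ :=
  ((‖ξ‖ ^ (-α) : ℝ) : ℂ) * charFun μ ((2 * π) • ξ)

def gaussianConv (μ : Measure V) (u : ℝ) (x : V) : ℝ :=
  ∫ y, rexp (-(π * ‖x - y‖ ^ 2 / u)) ∂μ

/-- Integrating out `ξ` gives the Gaussian averages `gaussianConv μ u x`, integrating out `u` gives
`rieszSymbol α μ`: Fubini for this function is the heart of the proof. -/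
def rieszHeatIntegrand (μ : Measure V) (α : ℝ) (x : V) (p : ℝ × V) : ℂ :=
  ((p.1 ^ (α / 2 - 1) : ℝ) : ℂ) *
    (𝐞 (-⟪p.2, x⟫) • (charFun μ ((2 * π) • p.2) * rexp (-(π * p.1 * ‖p.2‖ ^ 2))))

variable (μ : Measure V)

lemma rieszHeatIntegrand_eq_ofReal_mul (α : ℝ) (x : V) (u : ℝ) (ξ : V) :
    rieszHeatIntegrand μ α x (u, ξ) = ((u ^ (α / 2 - 1) * rexp (-(π * u * ‖ξ‖ ^ 2)) : ℝ) : ℂ) *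
      (𝐞 (-⟪ξ, x⟫) • charFun μ ((2 * π) • ξ)) := by
  simp only [rieszHeatIntegrand, Circle.smul_def, smul_eq_mul]
  push_cast
  ring

lemma setIntegral_rieszHeatIntegrand_fst {α : ℝ} (hα : 0 < α) (x : V) {ξ : V} (hξ : ξ ≠ 0) :
    ∫ u in Ioi (0 : ℝ), rieszHeatIntegrand μ α x (u, ξ) =
      ((Gamma (α / 2) * π ^ (-(α / 2)) : ℝ) : ℂ) * (𝐞 (-⟪ξ, x⟫) • rieszSymbol α μ ξ) := by
  simp only [rieszHeatIntegrand_eq_ofReal_mul, rieszSymbol, Circle.smul_def, smul_eq_mul]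
  rw [integral_mul_const, integral_complex_ofReal,
    integral_rpow_mul_exp_neg_pi_mul_sq_Ioi hα (norm_pos_iff.mpr hξ)]
  push_cast
  ring

lemma setIntegral_norm_rieszHeatIntegrand_fst {α : ℝ} (hα : 0 < α) (x : V) {ξ : V} (hξ : ξ ≠ 0) :
    ∫ u in Ioi (0 : ℝ), ‖rieszHeatIntegrand μ α x (u, ξ)‖ =
      Gamma (α / 2) * π ^ (-(α / 2)) * ‖rieszSymbol α μ ξ‖ := by
  have hnorm : EqOn (fun u => ‖rieszHeatIntegrand μ α x (u, ξ)‖)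
      (fun u => u ^ (α / 2 - 1) * rexp (-(π * u * ‖ξ‖ ^ 2)) * ‖charFun μ ((2 * π) • ξ)‖)
      (Ioi 0) := by
    intro u hu
    simp only [rieszHeatIntegrand_eq_ofReal_mul, norm_mul, Circle.norm_smul, Complex.norm_real,
      Real.norm_eq_abs, abs_of_pos (rpow_pos_of_pos (mem_Ioi.mp hu) (α / 2 - 1)),
      abs_of_pos (exp_pos _)]
  rw [setIntegral_congr_fun measurableSet_Ioi hnorm, integral_mul_const,
    integral_rpow_mul_exp_neg_pi_mul_sq_Ioi hα (norm_pos_iff.mpr hξ), rieszSymbol, norm_mul,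
    Complex.norm_real, Real.norm_of_nonneg (by positivity)]
  ring

variable [FiniteDimensional ℝ V] [BorelSpace V]

lemma fourier_gaussian_pi_mul {u : ℝ} (hu : 0 < u) (z : V) :
    𝓕 (fun ξ : V => ((rexp (-(π * u * ‖ξ‖ ^ 2)) : ℝ) : ℂ)) z =
      ((u ^ (-(Module.finrank ℝ V : ℝ) / 2) * rexp (-(π * ‖z‖ ^ 2 / u)) : ℝ) : ℂ) := by
  have hb : 0 < ((π * u : ℝ) : ℂ).re := by simpa using mul_pos pi_pos hu
  have h := fourier_gaussian_innerProductSpace hb z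
  simp only [Complex.ofReal_exp]
  convert h using 2
  · ext ξ; push_cast; ring_nf
  have hπ : (π : ℂ) ≠ 0 := Complex.ofReal_ne_zero.mpr pi_ne_zero
  have hu' : (u : ℂ) ≠ 0 := Complex.ofReal_ne_zero.mpr hu.ne'
  have hdiv : (π : ℂ) / ((π * u : ℝ) : ℂ) = ((u⁻¹ : ℝ) : ℂ) := by push_cast; field_simp
  rw [hdiv, ← Complex.ofReal_natCast, ← Complex.ofReal_ofNat, ← Complex.ofReal_div,
    ← Complex.ofReal_cpow (inv_nonneg.mpr hu.le), inv_rpow hu.le, ← rpow_neg hu.le,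
    Complex.ofReal_mul, Complex.ofReal_exp, neg_div]
  congr 3
  push_cast
  field_simp

variable [IsFiniteMeasure μ]

lemma integral_fourier_sub_eq_fourier_charFun_mul {g : V → ℂ} (hg : Integrable g) (x : V) :
    ∫ y, 𝓕 g (x - y) ∂μ = 𝓕 (fun ξ => charFun μ ((2 * π) • ξ) * g ξ) x := by
  have hsplit : ∀ y ξ : V, Complex.exp (↑(-2 * π * ⟪ξ, x - y⟫) * Complex.I) =
      Complex.exp (↑(-2 * π * ⟪ξ, x⟫) * Complex.I) *
        Complex.exp (⟪y, (2 * π) • ξ⟫ * Complex.I) := by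
    intro y ξ
    rw [← Complex.exp_add, inner_sub_right, real_inner_smul_right, real_inner_comm y]
    push_cast
    ring_nf
  have hint : Integrable (Function.uncurry fun (y ξ : V) =>
      Complex.exp (↑(-2 * π * ⟪ξ, x - y⟫) * Complex.I) • g ξ) (μ.prod volume) := by
    refine ((integrable_const (1 : ℝ)).mul_prod hg.norm).mono' ?_ (ae_of_all _ fun p => ?_)
    · refine AEStronglyMeasurable.smul (𝕜 := ℂ) (Continuous.aestronglyMeasurable ?_)
        (hg.aestronglyMeasurable.comp_snd (μ := μ))
      fun_prop
    · rw [Function.uncurry_apply_pair, norm_smul, Complex.norm_exp_ofReal_mul_I]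
  simp only [fourier_eq']
  rw [integral_integral_swap hint]
  refine integral_congr_ae (ae_of_all _ fun ξ => ?_)
  simp only [hsplit, smul_eq_mul, charFun_apply]
  rw [← integral_mul_const, ← integral_const_mul]
  congr 1 with y
  ring

lemma integrable_rieszSymbol {α : ℝ}
    (h : ∫⁻ ξ, ‖charFun μ ξ‖ₑ * ENNReal.ofReal (‖ξ‖ ^ (-α)) ≠ ⊤) :
    Integrable (rieszSymbol α μ) := by
  have hf : Integrable (fun ξ : V => ((‖ξ‖ ^ (-α) : ℝ) : ℂ) * charFun μ ξ) := by
    refine ⟨Measurable.aestronglyMeasurable (by fun_prop), ?_⟩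
    rw [hasFiniteIntegral_iff_enorm]
    convert h.lt_top using 3 with ξ
    rw [enorm_mul, mul_comm, ← ofReal_norm ((‖ξ‖ ^ (-α) : ℝ) : ℂ), Complex.norm_real,
      Real.norm_of_nonneg (by positivity)]
  have h2π : (2 * π : ℝ) ≠ 0 := by positivity
  refine ((hf.comp_smul h2π).const_mul (((2 * π) ^ α : ℝ) : ℂ)).congr (ae_of_all _ fun ξ => ?_)
  simp only [rieszSymbol, norm_smul, Real.norm_eq_abs, abs_of_pos two_pi_pos]
  rw [← mul_assoc, ← Complex.ofReal_mul, mul_rpow two_pi_pos.le (norm_nonneg ξ), ← mul_assoc,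
    ← rpow_add two_pi_pos, add_neg_cancel, rpow_zero, one_mul]

lemma integral_rieszHeatIntegrand_snd (α : ℝ) (x : V) {u : ℝ} (hu : 0 < u) :
    ∫ ξ, rieszHeatIntegrand μ α x (u, ξ) =
      ((u ^ (-((Module.finrank ℝ V - α) / 2) - 1) * gaussianConv μ u x : ℝ) : ℂ) := by
  have hgauss : Integrable fun ξ : V => ((rexp (-(π * u * ‖ξ‖ ^ 2)) : ℝ) : ℂ) := by
    have hb : 0 < ((π * u : ℝ) : ℂ).re := by simpa using mul_pos pi_pos hu
    refine (GaussianFourier.integrable_cexp_neg_mul_sq_norm_add hb 0 (0 : V)).congr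
      (ae_of_all _ fun ξ => ?_)
    simp only [zero_mul, add_zero, Complex.ofReal_exp]
    push_cast
    ring_nf
  simp only [rieszHeatIntegrand]
  rw [integral_const_mul, ← fourier_eq, ← integral_fourier_sub_eq_fourier_charFun_mul μ hgauss]
  simp only [fourier_gaussian_pi_mul hu, gaussianConv]
  rw [integral_complex_ofReal, integral_const_mul, ← Complex.ofReal_mul,
    ← mul_assoc, ← rpow_add hu]
  congr 3
  ring

lemma integrable_rieszHeatIntegrand [Nontrivial V] {α : ℝ} (hα : 0 < α)
    (hR : Integrable (rieszSymbol α μ)) (x : V) :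
    Integrable (rieszHeatIntegrand μ α x) ((volume.restrict (Ioi 0)).prod volume) := by
  have hmeas : AEStronglyMeasurable (rieszHeatIntegrand μ α x)
      ((volume.restrict (Ioi 0)).prod volume) := by
    unfold rieszHeatIntegrand
    simp only [Circle.smul_def]
    exact Measurable.aestronglyMeasurable (by fun_prop)
  refine (integrable_prod_iff' hmeas).mpr ⟨?_, ?_⟩
  · filter_upwards [(volume : Measure V).ae_ne 0] with ξ hξ
    simp only [rieszHeatIntegrand_eq_ofReal_mul]
    refine Integrable.mul_const ?_ _
    exact (integrableOn_rpow_mul_exp_neg_mul_Ioi (half_pos hα)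
      (by positivity : 0 < π * ‖ξ‖ ^ 2)).ofReal.congr (ae_of_all _ fun u => by
        simp only [mul_right_comm π]; rfl)
  · refine (hR.norm.const_mul (Gamma (α / 2) * π ^ (-(α / 2)))).congr ?_
    filter_upwards [(volume : Measure V).ae_ne 0] with ξ hξ
    exact (setIntegral_norm_rieszHeatIntegrand_fst μ hα x hξ).symm

lemma integrableOn_rpow_mul_gaussianConv [Nontrivial V] {α : ℝ} (hα : 0 < α)
    (hR : Integrable (rieszSymbol α μ)) (x : V) :
    IntegrableOn (fun u => u ^ (-((Module.finrank ℝ V - α) / 2) - 1) * gaussianConv μ u x)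
      (Ioi 0) := by
  have h := (integrable_rieszHeatIntegrand μ hα hR x).integral_prod_left.re
  refine h.congr ?_
  filter_upwards [ae_restrict_mem measurableSet_Ioi] with u hu
  rw [integral_rieszHeatIntegrand_snd μ α x hu, RCLike.re_to_complex, Complex.ofReal_re]

lemma ofReal_integral_rpow_mul_gaussianConv [Nontrivial V] {α : ℝ} (hα : 0 < α)
    (hR : Integrable (rieszSymbol α μ)) (x : V) :
    ((∫ u in Ioi (0 : ℝ), u ^ (-((Module.finrank ℝ V - α) / 2) - 1) * gaussianConv μ u x :
        ℝ) : ℂ) =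
      ((Gamma (α / 2) * π ^ (-(α / 2)) : ℝ) : ℂ) * 𝓕 (rieszSymbol α μ) x := by
  rw [← integral_complex_ofReal,
    setIntegral_congr_fun measurableSet_Ioi fun u hu =>
      (integral_rieszHeatIntegrand_snd μ α x hu).symm,
    integral_integral_swap (f := fun u ξ => rieszHeatIntegrand μ α x (u, ξ))
      (integrable_rieszHeatIntegrand μ hα hR x), fourier_eq,
    ← integral_const_mul]
  refine integral_congr_ae ?_
  filter_upwards [(volume : Measure V).ae_ne 0] with ξ hξ
  exact setIntegral_rieszHeatIntegrand_fst μ hα x hξ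

lemma integrable_exp_neg_mul_sq_norm_sub_div {u : ℝ} (hu : 0 ≤ u) (x : V) :
    Integrable (fun y => rexp (-(π * ‖x - y‖ ^ 2 / u))) μ :=
  (integrable_const (1 : ℝ)).mono' (by fun_prop) (ae_of_all _ fun y => by
    rw [Real.norm_of_nonneg (exp_nonneg _), exp_le_one_iff, neg_nonpos]
    positivity)

lemma measure_singleton_eq_zero_of_lintegral_ne_top {b : ℝ} {x : V}
    (h : ∫⁻ u in Ioi (0 : ℝ), ENNReal.ofReal (u ^ b * gaussianConv μ u x) ≠ ⊤) :
    μ {x} = 0 := by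
  have hle : ∀ u ∈ Ioi (0 : ℝ), ENNReal.ofReal (u ^ b) * μ {x} ≤
      ENNReal.ofReal (u ^ b * gaussianConv μ u x) := by
    intro u hu
    have hatom : μ.real {x} ≤ gaussianConv μ u x := by
      calc μ.real {x} = ∫ y in {x}, rexp (-(π * ‖x - y‖ ^ 2 / u)) ∂μ := by
            rw [setIntegral_congr_fun (g := fun _ => (1 : ℝ)) (measurableSet_singleton x)
              fun y hy => by simp [mem_singleton_iff.mp hy], setIntegral_const, smul_eq_mul,
              mul_one]
        _ ≤ gaussianConv μ u x :=
            setIntegral_le_integral (integrable_exp_neg_mul_sq_norm_sub_div μ (le_of_lt hu) x)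
              (ae_of_all _ fun y => exp_nonneg _)
    rw [ENNReal.ofReal_mul (rpow_nonneg (le_of_lt hu) b), ← ofReal_measureReal]
    gcongr
  by_contra hx
  refine h (eq_top_iff.mpr ?_)
  calc ⊤ = (∫⁻ u in Ioi (0 : ℝ), ENNReal.ofReal (u ^ b)) * μ {x} := by
        rw [lintegral_ofReal_rpow_Ioi_eq_top, ENNReal.top_mul hx]
    _ ≤ _ := by
        rw [← lintegral_mul_const' _ _ (measure_ne_top μ _)]
        exact setLIntegral_mono' measurableSet_Ioi hle

end FourierSide

/-- The kernel identity fails at `y = x`, where `0 ^ (α - n) = 0` in Lean. -/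
lemma rieszPot_eq_lintegral_gaussianConv {n : ℕ} {α : ℝ} (hαn : α < n) (μ : Measure (Euc n))
    [IsFiniteMeasure μ] {x : Euc n} (hx : μ {x} = 0) :
    rieszPot α μ x = ENNReal.ofReal (π ^ ((n - α) / 2) / Gamma ((n - α) / 2)) *
      ∫⁻ u in Ioi (0 : ℝ), ENNReal.ofReal (u ^ (-((n - α) / 2) - 1) * gaussianConv μ u x) := by
  have hs : 0 < (n : ℝ) - α := sub_pos.mpr hαn
  have hkernel : ∀ᵐ y ∂μ, ENNReal.ofReal (‖x - y‖ ^ (α - n)) =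
      ENNReal.ofReal (π ^ ((n - α) / 2) / Gamma ((n - α) / 2)) *
        ∫⁻ u in Ioi (0 : ℝ), ENNReal.ofReal (u ^ (-((n - α) / 2) - 1) *
          rexp (-(π * ‖x - y‖ ^ 2 / u))) := by
    filter_upwards [measure_eq_zero_iff_ae_notMem.mp hx] with y hy
    rw [← ofReal_rpow_neg_eq_lintegral_exp hs (norm_pos_iff.mpr (sub_ne_zero.mpr
      (Ne.symm hy))), neg_sub]
  rw [rieszPot, lintegral_congr_ae hkernel, lintegral_const_mul' _ _ ENNReal.ofReal_ne_top,
    lintegral_lintegral_swap (Measurable.aemeasurable (by fun_prop))]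
  congr 1
  refine setLIntegral_congr_fun measurableSet_Ioi fun u hu => ?_
  have hint := (integrable_exp_neg_mul_sq_norm_sub_div μ (le_of_lt hu) x).const_mul
    (u ^ (-((n - α) / 2) - 1))
  rw [gaussianConv, ← integral_const_mul, ofReal_integral_eq_lintegral_ofReal hint
    (ae_of_all _ fun y => mul_nonneg (rpow_nonneg (le_of_lt hu) _) (exp_nonneg _))]

def rieszConst (n : ℕ) (α : ℝ) : ℝ :=
  π ^ ((n - α) / 2) / Gamma ((n - α) / 2) * (Gamma (α / 2) * π ^ (-(α / 2)))

theorem rieszPot_eq_ofReal_re_fourier_rieszSymbol {n : ℕ} {α : ℝ} (hα : 0 < α) (hαn : α < n)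
    (μ : Measure (Euc n)) [IsFiniteMeasure μ] (hR : Integrable (rieszSymbol α μ)) (x : Euc n) :
    rieszPot α μ x = ENNReal.ofReal (rieszConst n α * (𝓕 (rieszSymbol α μ) x).re) := by
  have : Nontrivial (Euc n) :=
    Module.nontrivial_of_finrank_pos (R := ℝ) (by
      rw [finrank_euclideanSpace_fin]; exact_mod_cast hα.trans hαn)
  have hint := integrableOn_rpow_mul_gaussianConv μ hα hR x
  have hval := congrArg Complex.re (ofReal_integral_rpow_mul_gaussianConv μ hα hR x)
  simp only [finrank_euclideanSpace_fin, Complex.ofReal_re, Complex.re_ofReal_mul] at hint hval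
  have hlint :
      ∫⁻ u in Ioi (0 : ℝ), ENNReal.ofReal (u ^ (-((n - α) / 2) - 1) * gaussianConv μ u x) =
        ENNReal.ofReal (∫ u in Ioi (0 : ℝ), u ^ (-((n - α) / 2) - 1) * gaussianConv μ u x) := by
    refine (ofReal_integral_eq_lintegral_ofReal hint ?_).symm
    filter_upwards [ae_restrict_mem measurableSet_Ioi] with u hu
    exact mul_nonneg (rpow_nonneg (le_of_lt hu) _) (integral_nonneg fun y => exp_nonneg _)
  have hx : μ {x} = 0 :=
    measure_singleton_eq_zero_of_lintegral_ne_top μ (hlint ▸ ENNReal.ofReal_ne_top)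
  rw [rieszPot_eq_lintegral_gaussianConv hαn μ hx, hlint, hval,
    ← ENNReal.ofReal_mul (by positivity), rieszConst]
  ring_nf

theorem stmt_10 {n : ℕ} (α : ℝ) (hα : 0 < α) (hαn : α < n)
    (μ : Measure (Euc n)) [IsFiniteMeasure μ]
    (hF : (∫⁻ ξ : Euc n,
        (‖∫ x, Complex.exp (Complex.I * ((inner ℝ x ξ : ℝ) : ℂ)) ∂μ‖₊ : ℝ≥0∞) *
          ENNReal.ofReal (‖ξ‖ ^ (-α))) ≠ ⊤) :
    (∀ x, rieszPot α μ x ≠ ⊤) ∧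
      Continuous (fun x => (rieszPot α μ x).toReal) ∧
      Tendsto (fun x => (rieszPot α μ x).toReal) (Filter.cocompact (Euc n)) (nhds 0) := by
  have hR : Integrable (rieszSymbol α μ) := integrable_rieszSymbol μ
    (by simpa only [charFun_apply, mul_comm Complex.I, enorm_eq_nnnorm] using hF)
  have hU : (fun x => (rieszPot α μ x).toReal) =
      fun x => max (rieszConst n α * (𝓕 (rieszSymbol α μ) x).re) 0 := by
    ext x
    rw [rieszPot_eq_ofReal_re_fourier_rieszSymbol hα hαn μ hR, ENNReal.toReal_ofReal']
  have hcont : Continuous (𝓕 (rieszSymbol α μ)) :=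
    VectorFourier.fourierIntegral_continuous Real.continuous_fourierChar
      (innerSL ℝ).continuous₂ hR
  have hlim : Tendsto (𝓕 (rieszSymbol α μ)) (cocompact (Euc n)) (𝓝 0) :=
    tendsto_integral_exp_inner_smul_cocompact (rieszSymbol α μ)
  refine ⟨fun x => ?_, ?_, ?_⟩
  · rw [rieszPot_eq_ofReal_re_fourier_rieszSymbol hα hαn μ hR]
    exact ENNReal.ofReal_ne_top
  · rw [hU]
    fun_prop
  · rw [hU]
    simpa using (((Complex.continuous_re.tendsto 0).comp hlim).const_mul (rieszConst n α)).max
      (tendsto_const_nhds (x := (0 : ℝ)))
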